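/- arXiv:1804.01980 — 6 statements merged into one kernel-verified Lean document; each statement's English description precedes it below -/
import Mathlib

section
/- Let α > 0 and let (M_n) be a countable collection of positive test supermartingales in an imprecise probability tree such that every process multiplier satisfies μM_n(s)(x) ≤ α for all situations s and states x. Then any countable convex combination M(s) := Σ_n λ_n M_n(s), with λ_n ≥ 0 summing to 1, is again a positive test supermartingale with μM(s)(x) ≤ α for all s, x. -/
open Filter

/-- prefix of length `n` of a path -/
def pref {X : Type*} (ω : ℕ → X) (n : ℕ) : List X := (List.range n).map ω

/-- process difference -/
def pdiff {X : Type*} (M : List X → ℝ) (s : List X) : X → ℝ := fun x => M (s ++ [x]) - M s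

/-- process multiplier -/
noncomputable def pmul {X : Type*} (M : List X → ℝ) (s : List X) : X → ℝ :=
  fun x => M (s ++ [x]) / M s

/-- family of coherent upper expectations (local models of an imprecise probability tree) -/
def Coherent {X : Type*} (Q : List X → (X → ℝ) → ℝ) : Prop :=
  ∀ s : List X,
    (∀ h : X → ℝ, Q s h ≤ ⨆ x, h x) ∧
    (∀ h g : X → ℝ, Q s (h + g) ≤ Q s h + Q s g) ∧
    (∀ (h : X → ℝ) (c : ℝ), 0 ≤ c → Q s (c • h) = c * Q s h)

/-- supermartingale for the tree with local models `Q` -/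
def IsSupermart {X : Type*} (Q : List X → (X → ℝ) → ℝ) (M : List X → ℝ) : Prop :=
  ∀ s : List X, Q s (pdiff M s) ≤ 0

/-- bounded below process -/
def BddBelowProc {X : Type*} (M : List X → ℝ) : Prop := ∃ C : ℝ, ∀ s : List X, C ≤ M s

/-- test supermartingale: nonnegative supermartingale with initial value 1 -/
def IsTestSupermart {X : Type*} (Q : List X → (X → ℝ) → ℝ) (M : List X → ℝ) : Prop :=
  IsSupermart Q M ∧ (∀ s : List X, 0 ≤ M s) ∧ M [] = 1

/-- game-theoretic upper expectation conditional on a situation `s` -/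
noncomputable def EV {X : Type*} (Q : List X → (X → ℝ) → ℝ) (f : (ℕ → X) → EReal)
    (s : List X) : EReal :=
  sInf { y : EReal | ∃ M : List X → ℝ, IsSupermart Q M ∧ BddBelowProc M ∧
    (∀ ω : ℕ → X, pref ω s.length = s →
      f ω ≤ Filter.liminf (fun n => ((M (pref ω n) : ℝ) : EReal)) Filter.atTop) ∧
    y = ((M s : ℝ) : EReal) }

/-!
The weighted sum is dominated termwise: the multiplier bound and `M n [] = 1` give
`M n s ≤ α ^ |s|` uniformly in `n`, so every sum converges, and the increment of the sum at `s`
is the countable nonnegative combination `∑ λₙ ΔMₙ(s)` of gambles bounded above by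
`α ^ (|s| + 1)`. Subadditivity and homogeneity make the upper expectation of every partial sum
nonpositive, and since the remaining tail is at most `α ^ (|s| + 1) ∑_{n ≥ N} λₙ`, the bound
`Q(h) ≤ Q(g) + sup (h - g)` passes to the limit. The multiplier bound `M n (s x) ≤ α M n s`
is linear in `M n`, so it survives the weighted sum.
-/

open Topology

section

variable {X : Type*}

theorem pmul_le_iff {M : List X → ℝ} {s : List X} (hs : 0 < M s) (x : X) (α : ℝ) :
    pmul M s x ≤ α ↔ M (s ++ [x]) ≤ α * M s :=
  div_le_iff₀ hs

theorem le_pow_length_of_pmul_le {M : List X → ℝ} {α : ℝ} (hα : 0 ≤ α) (hpos : ∀ s, 0 < M s)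
    (h0 : M [] = 1) (hmul : ∀ s x, pmul M s x ≤ α) (s : List X) : M s ≤ α ^ s.length := by
  induction s using List.reverseRecOn with
  | nil => simp [h0]
  | append_singleton s x ih =>
    calc M (s ++ [x]) ≤ α * M s := (pmul_le_iff (hpos s) x α).1 (hmul s x)
      _ ≤ α * α ^ s.length := mul_le_mul_of_nonneg_left ih hα
      _ = α ^ (s ++ [x]).length := by simp [pow_succ, mul_comm]

theorem summable_mul_of_nonneg_of_le_const {l a : ℕ → ℝ} {C : ℝ} (hl : ∀ n, 0 ≤ l n)
    (hls : Summable l) (ha : ∀ n, 0 ≤ a n) (haC : ∀ n, a n ≤ C) :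
    Summable fun n => l n * a n :=
  (hls.mul_right C).of_nonneg_of_le (fun n => mul_nonneg (hl n) (ha n))
    (fun n => mul_le_mul_of_nonneg_left (haC n) (hl n))

theorem pdiff_tsum_mul {l : ℕ → ℝ} {M : ℕ → List X → ℝ} {s : List X} {x : X}
    (hs : Summable fun n => l n * M n s) (hsx : Summable fun n => l n * M n (s ++ [x])) :
    pdiff (fun s => ∑' n, l n * M n s) s x = ∑' n, l n * pdiff (M n) s x := by
  simp only [pdiff, mul_sub]
  exact (hsx.tsum_sub hs).symm

theorem pmul_tsum_mul_le {l : ℕ → ℝ} {M : ℕ → List X → ℝ} {s : List X} {x : X} {α : ℝ}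
    (hl : ∀ n, 0 ≤ l n) (hs : Summable fun n => l n * M n s)
    (hsx : Summable fun n => l n * M n (s ++ [x])) (hpos : 0 < ∑' n, l n * M n s)
    (hMpos : ∀ n, 0 < M n s) (hmul : ∀ n, pmul (M n) s x ≤ α) :
    pmul (fun s => ∑' n, l n * M n s) s x ≤ α := by
  rw [pmul_le_iff hpos, ← tsum_mul_left]
  refine hsx.tsum_le_tsum (fun n => ?_) (hs.mul_left α)
  calc l n * M n (s ++ [x]) ≤ l n * (α * M n s) :=
        mul_le_mul_of_nonneg_left ((pmul_le_iff (hMpos n) x α).1 (hmul n)) (hl n)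
    _ = α * (l n * M n s) := by ring

namespace Coherent

variable {Q : List X → (X → ℝ) → ℝ}

theorem map_zero (hQ : Coherent Q) (s : List X) : Q s 0 = 0 := by
  simpa using (hQ s).2.2 0 0 le_rfl

theorem sum_le {ι : Type*} (hQ : Coherent Q) (s : List X) (t : Finset ι) (f : ι → X → ℝ) :
    Q s (∑ i ∈ t, f i) ≤ ∑ i ∈ t, Q s (f i) :=
  Finset.le_sum_of_subadditive (Q s) (hQ.map_zero s).le (hQ s).2.1 t f

theorem le_add_iSup_sub (hQ : Coherent Q) (s : List X) (g h : X → ℝ) :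
    Q s h ≤ Q s g + ⨆ x, (h - g) x :=
  calc Q s h = Q s (g + (h - g)) := by rw [add_sub_cancel]
    _ ≤ Q s g + Q s (h - g) := (hQ s).2.1 _ _
    _ ≤ Q s g + ⨆ x, (h - g) x := by gcongr; exact (hQ s).1 _

theorem tsum_mul_nonpos [Nonempty X] (hQ : Coherent Q) (s : List X) {c : ℕ → ℝ}
    {f : ℕ → X → ℝ} {C : ℝ} (hc : ∀ n, 0 ≤ c n) (hcs : Summable c) (hfC : ∀ n x, f n x ≤ C)
    (hcf : ∀ x, Summable fun n => c n * f n x) (hf : ∀ n, Q s (f n) ≤ 0) :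
    Q s (fun x => ∑' n, c n * f n x) ≤ 0 := by
  set h : X → ℝ := fun x => ∑' n, c n * f n x
  set g : ℕ → X → ℝ := fun N => ∑ n ∈ Finset.range N, c n • f n
  have partial_nonpos (N : ℕ) : Q s (g N) ≤ 0 :=
    calc Q s (g N) ≤ ∑ n ∈ Finset.range N, Q s (c n • f n) := hQ.sum_le s _ _
      _ = ∑ n ∈ Finset.range N, c n * Q s (f n) :=
        Finset.sum_congr rfl fun n _ => (hQ s).2.2 _ _ (hc n)
      _ ≤ 0 := Finset.sum_nonpos fun n _ => mul_nonpos_of_nonneg_of_nonpos (hc n) (hf n)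
  have tail_le (N : ℕ) (x : X) : (h - g N) x ≤ (∑' i, c (i + N)) * C := by
    have hsplit := (hcf x).sum_add_tsum_nat_add N
    calc (h - g N) x = ∑' i, c (i + N) * f (i + N) x := by
          simp only [h, g, Pi.sub_apply, Finset.sum_apply, Pi.smul_apply, smul_eq_mul]
          linarith
      _ ≤ ∑' i, c (i + N) * C :=
          ((summable_nat_add_iff N).2 (hcf x)).tsum_le_tsum
            (fun i => mul_le_mul_of_nonneg_left (hfC _ x) (hc _))
            ((summable_nat_add_iff N).2 (hcs.mul_right C))
      _ = (∑' i, c (i + N)) * C := tsum_mul_right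
  have le_tail (N : ℕ) : Q s h ≤ (∑' i, c (i + N)) * C :=
    calc Q s h ≤ Q s (g N) + ⨆ x, (h - g N) x := hQ.le_add_iSup_sub s _ h
      _ ≤ 0 + (∑' i, c (i + N)) * C := add_le_add (partial_nonpos N) (ciSup_le (tail_le N))
      _ = (∑' i, c (i + N)) * C := zero_add _
  have tail_tendsto : Tendsto (fun N => (∑' i, c (i + N)) * C) atTop (𝓝 0) := by
    simpa using (tendsto_sum_nat_add c).mul_const C
  exact ge_of_tendsto' tail_tendsto le_tail

end Coherent

theorem IsSupermart.tsum_mul [Nonempty X] {Q : List X → (X → ℝ) → ℝ} (hQ : Coherent Q)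
    {M : ℕ → List X → ℝ} (hM : ∀ n, IsSupermart Q (M n)) (hM0 : ∀ n s, 0 ≤ M n s)
    {B : ℕ → ℝ} (hB : ∀ n s, M n s ≤ B s.length) {l : ℕ → ℝ} (hl : ∀ n, 0 ≤ l n)
    (hls : Summable l) : IsSupermart Q (fun s => ∑' n, l n * M n s) := by
  intro s
  have hsum (s : List X) : Summable fun n => l n * M n s :=
    summable_mul_of_nonneg_of_le_const hl hls (fun n => hM0 n s) (fun n => hB n s)
  have hdiff : pdiff (fun s => ∑' n, l n * M n s) s = fun x => ∑' n, l n * pdiff (M n) s x :=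
    funext fun x => pdiff_tsum_mul (hsum s) (hsum (s ++ [x]))
  have hdiff_le (n : ℕ) (x : X) : pdiff (M n) s x ≤ B (s.length + 1) := by
    have := hB n (s ++ [x])
    simp only [pdiff, List.length_append, List.length_singleton] at this ⊢
    linarith [hM0 n s]
  rw [hdiff]
  refine hQ.tsum_mul_nonpos s hl hls hdiff_le (fun x => ?_) (fun n => hM n s)
  simpa only [pdiff, mul_sub] using (hsum (s ++ [x])).sub (hsum s)

end

theorem convex_combination_test_supermartingale_general {X : Type*} [Nonempty X]
    (Q : List X → (X → ℝ) → ℝ) (hQ : Coherent Q) (α : ℝ) (hα : 0 < α)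
    (M : ℕ → List X → ℝ) (hM : ∀ n, IsTestSupermart Q (M n))
    (hMpos : ∀ n s, 0 < M n s)
    (hmul : ∀ n s x, pmul (M n) s x ≤ α)
    (l : ℕ → ℝ) (hl : ∀ n, 0 ≤ l n) (hls : Summable l) (hl1 : ∑' n, l n = 1) :
    (∀ s : List X, Summable (fun n => l n * M n s)) ∧
    IsTestSupermart Q (fun s => ∑' n, l n * M n s) ∧
    (∀ s : List X, 0 < ∑' n, l n * M n s) ∧
    (∀ (s : List X) (x : X), pmul (fun s => ∑' n, l n * M n s) s x ≤ α) := by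
  have hbound (n : ℕ) (s : List X) : M n s ≤ α ^ s.length :=
    le_pow_length_of_pmul_le hα.le (hMpos n) (hM n).2.2 (hmul n) s
  have hsum (s : List X) : Summable fun n => l n * M n s :=
    summable_mul_of_nonneg_of_le_const hl hls (fun n => (hMpos n s).le) (fun n => hbound n s)
  obtain ⟨m, hm⟩ : ∃ m, 0 < l m := by
    by_contra! h
    simp [fun n => le_antisymm (h n) (hl n)] at hl1
  have hpos (s : List X) : 0 < ∑' n, l n * M n s :=
    (hsum s).tsum_pos (fun n => mul_nonneg (hl n) (hMpos n s).le) m (mul_pos hm (hMpos m s))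
  refine ⟨hsum, ⟨?_, fun s => (hpos s).le, ?_⟩, hpos, fun s x => ?_⟩
  · exact IsSupermart.tsum_mul hQ (fun n => (hM n).1) (fun n s => (hMpos n s).le) hbound hl hls
  · simp [fun n => (hM n).2.2, hl1]
  · exact pmul_tsum_mul_le hl (hsum s) (hsum (s ++ [x])) (hpos s) (fun n => hMpos n s)
      (fun n => hmul n s x)

theorem convex_combination_test_supermartingale {X : Type*} [Fintype X] [Nonempty X]
    (Q : List X → (X → ℝ) → ℝ) (hQ : Coherent Q) (α : ℝ) (hα : 0 < α)
    (M : ℕ → List X → ℝ) (hM : ∀ n, IsTestSupermart Q (M n))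
    (hMpos : ∀ n s, 0 < M n s)
    (hmul : ∀ n s x, pmul (M n) s x ≤ α)
    (l : ℕ → ℝ) (hl : ∀ n, 0 ≤ l n) (hls : Summable l) (hl1 : ∑' n, l n = 1) :
    (∀ s : List X, Summable (fun n => l n * M n s)) ∧
    IsTestSupermart Q (fun s => ∑' n, l n * M n s) ∧
    (∀ s : List X, 0 < ∑' n, l n * M n s) ∧
    (∀ (s : List X) (x : X), pmul (fun s => ∑' n, l n * M n s) s x ≤ α) :=
  convex_combination_test_supermartingale_general Q hQ α hα M hM hMpos hmul l hl hls hl1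
end

section
/- For any supermartingale M in an imprecise probability tree and any situation s, M(s) ≥ inf over paths ω through s of limsup_n M(ω^n) ≥ inf over paths ω through s of liminf_n M(ω^n). -/
open Filter

/-!
In every situation a supermartingale has a successor at which it does not increase: by coherence
`min ΔM(s) ≤ Q(ΔM(s)|s) ≤ 0`. Choosing such a successor at every step after `s` gives a path
through `s` along which `M` never exceeds `M s`, so its limsup is at most `M s`. The second
inequality is `liminf ≤ limsup` path by path.
-/

section

variable {X : Type*}

theorem Coherent.apply_zero {Q : List X → (X → ℝ) → ℝ} (hQ : Coherent Q) (s : List X) :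
    Q s 0 = 0 := by
  simpa using (hQ s).2.2 0 0 le_rfl

theorem Coherent.exists_le [Finite X] [Nonempty X] {Q : List X → (X → ℝ) → ℝ}
    (hQ : Coherent Q) (s : List X) (h : X → ℝ) : ∃ x, h x ≤ Q s h := by
  obtain ⟨x, hx⟩ := Finite.exists_min h
  refine ⟨x, ?_⟩
  -- `0 = Q s 0 ≤ Q s h + Q s (-h) ≤ Q s h - h x`
  have hneg : Q s (-h) ≤ -h x :=
    ((hQ s).1 _).trans (ciSup_le fun y => neg_le_neg (hx y))
  have hsub : Q s (h + -h) ≤ Q s h + Q s (-h) := (hQ s).2.1 _ _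
  rw [add_neg_cancel, hQ.apply_zero] at hsub
  linarith

theorem IsSupermart.exists_succ_le [Finite X] [Nonempty X] {Q : List X → (X → ℝ) → ℝ}
    {M : List X → ℝ} (hM : IsSupermart Q M) (hQ : Coherent Q) (s : List X) :
    ∃ x, M (s ++ [x]) ≤ M s := by
  obtain ⟨x, hx⟩ := hQ.exists_le s (pdiff M s)
  exact ⟨x, sub_nonpos.1 (hx.trans (hM s))⟩

theorem pref_succ (ω : ℕ → X) (n : ℕ) : pref ω (n + 1) = pref ω n ++ [ω n] := by
  simp [pref, List.range_succ]

theorem pref_eq_ofFn (ω : ℕ → X) (n : ℕ) : pref ω n = List.ofFn fun i : Fin n => ω i := by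
  apply List.ext_getElem <;> simp [pref]

-- `List.ofFn` stands for `pref` here so that the recursive calls are visibly at smaller indices.
def followPath (s : List X) (f : List X → X) (n : ℕ) : X :=
  if h : n < s.length then s[n] else f (List.ofFn fun i : Fin n => followPath s f i)

theorem followPath_of_lt (s : List X) (f : List X → X) {n : ℕ} (hn : n < s.length) :
    followPath s f n = s[n] := by
  rw [followPath, dif_pos hn]

theorem followPath_of_le (s : List X) (f : List X → X) {n : ℕ} (hn : s.length ≤ n) :
    followPath s f n = f (pref (followPath s f) n) := by
  rw [followPath, dif_neg hn.not_gt, pref_eq_ofFn]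

theorem pref_followPath_length (s : List X) (f : List X → X) :
    pref (followPath s f) s.length = s := by
  apply List.ext_getElem
  · simp [pref]
  · intro n hn _
    simp only [pref, List.getElem_map, List.getElem_range]
    exact followPath_of_lt s f _

theorem exists_path_le_of_exists_succ_le {M : List X → ℝ}
    (hstep : ∀ t, ∃ x, M (t ++ [x]) ≤ M t) (s : List X) :
    ∃ ω : ℕ → X, pref ω s.length = s ∧ ∀ n ≥ s.length, M (pref ω n) ≤ M s := by
  choose f hf using hstep
  refine ⟨followPath s f, pref_followPath_length s f, fun n hn => ?_⟩
  induction n, hn using Nat.le_induction with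
  | base => rw [pref_followPath_length]
  | succ n hn ih =>
    rw [pref_succ, followPath_of_le s f hn]
    exact (hf _).trans ih

end

theorem supermartingale_inf_limsup {X : Type*} [Fintype X] [Nonempty X]
    (Q : List X → (X → ℝ) → ℝ) (hQ : Coherent Q)
    (M : List X → ℝ) (hM : IsSupermart Q M) (s : List X) :
    (⨅ ω : {ω : ℕ → X // pref ω s.length = s},
        Filter.limsup (fun n => ((M (pref ω.1 n) : ℝ) : EReal)) Filter.atTop) ≤ (M s : EReal) ∧
    (⨅ ω : {ω : ℕ → X // pref ω s.length = s},
        Filter.liminf (fun n => ((M (pref ω.1 n) : ℝ) : EReal)) Filter.atTop) ≤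
      ⨅ ω : {ω : ℕ → X // pref ω s.length = s},
        Filter.limsup (fun n => ((M (pref ω.1 n) : ℝ) : EReal)) Filter.atTop := by
  obtain ⟨ω, hωs, hle⟩ := exists_path_le_of_exists_succ_le (hM.exists_succ_le hQ) s
  refine ⟨iInf_le_of_le ⟨ω, hωs⟩ ?_, iInf_mono fun _ => liminf_le_limsup⟩
  exact limsup_le_of_le (by isBoundedDefault)
    (eventually_atTop.2 ⟨s.length, fun n hn => EReal.coe_le_coe_iff.2 (hle n hn)⟩)
end

section
/- In an imprecise probability tree, if the game-theoretic upper expectation of an extended real variable f conditional on a situation s is finite (E_V(f|s) < +∞), then E_V(f|t) < +∞ for every situation t following s. -/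
open Filter

section

variable {X : Type*}

def LiminfDominates (f : (ℕ → X) → EReal) (M : List X → ℝ) (s : List X) : Prop :=
  ∀ ω : ℕ → X, pref ω s.length = s →
    f ω ≤ liminf (fun n => ((M (pref ω n) : ℝ) : EReal)) atTop

lemma pref_eq_of_prefix {ω : ℕ → X} {s t : List X} (hst : s <+: t)
    (ht : pref ω t.length = t) : pref ω s.length = s := by
  have htake : t.take s.length = pref ω s.length := by
    rw [← ht]
    simp only [pref, ← List.map_take, List.take_range, Nat.min_eq_left hst.length_le]
  exact htake.symm.trans (List.prefix_iff_eq_take.mp hst).symm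

variable {Q : List X → (X → ℝ) → ℝ} {f : (ℕ → X) → EReal} {M : List X → ℝ} {s t : List X}

lemma LiminfDominates.of_prefix (hM : LiminfDominates f M s) (hst : s <+: t) :
    LiminfDominates f M t :=
  fun ω ht => hM ω (pref_eq_of_prefix hst ht)

lemma EV_le_of_supermart (hM : IsSupermart Q M) (hbdd : BddBelowProc M)
    (hdom : LiminfDominates f M s) : EV Q f s ≤ M s :=
  sInf_le ⟨M, hM, hbdd, hdom, rfl⟩

lemma exists_supermart_of_EV_lt_top (h : EV Q f s < ⊤) :
    ∃ M, IsSupermart Q M ∧ BddBelowProc M ∧ LiminfDominates f M s := by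
  by_contra hnone
  refine h.ne (sInf_eq_top.mpr ?_)
  rintro _ ⟨M, hM, hbdd, hdom, -⟩
  exact absurd ⟨M, hM, hbdd, hdom⟩ hnone

end

theorem EV_finite_of_prefix_general {X : Type*}
    (Q : List X → (X → ℝ) → ℝ)
    (f : (ℕ → X) → EReal) (s : List X) (hfin : EV Q f s < ⊤)
    (t : List X) (hst : s <+: t) :
    EV Q f t < ⊤ := by
  obtain ⟨M, hM, hbdd, hdom⟩ := exists_supermart_of_EV_lt_top hfin
  exact (EV_le_of_supermart hM hbdd (hdom.of_prefix hst)).trans_lt (EReal.coe_lt_top _)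

theorem EV_finite_of_prefix {X : Type*} [Fintype X] [Nonempty X]
    (Q : List X → (X → ℝ) → ℝ) (hQ : Coherent Q)
    (f : (ℕ → X) → EReal) (s : List X) (hfin : EV Q f s < ⊤)
    (t : List X) (hst : s <+: t) :
    EV Q f t < ⊤ :=
  EV_finite_of_prefix_general Q f s hfin t hst
end

section
/- In an imprecise probability tree, for any extended real variable f, the unconditional game-theoretic upper expectation satisfies E_V(f) = inf{ M(□) : M a bounded-below supermartingale such that liminf M ≥ f strictly almost surely }, where 'liminf M ≥ f strictly almost surely' means there exists a test supermartingale converging to +∞ on the set of paths ω where liminf_n M(ω^n) < f(ω). -/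
open Filter

/-!
A supermartingale that dominates `f` only strictly almost surely is turned into one that
dominates it surely by adding `ε • T`, where `T` is the test supermartingale diverging on the
exceptional paths: this costs only `ε` at `□`, and `ε` is arbitrary. Conversely, the constant
test supermartingale `1` diverges nowhere, so sure domination is a special case.
-/

section Supermartingales

variable {X : Type*} {Q : List X → (X → ℝ) → ℝ}

lemma pdiff_add_mul (M T : List X → ℝ) (ε : ℝ) (s : List X) :
    pdiff (fun s => M s + ε * T s) s = pdiff M s + ε • pdiff T s := by
  funext x
  simp only [pdiff, Pi.add_apply, Pi.smul_apply, smul_eq_mul]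
  ring

lemma IsSupermart.add_mul (hQ : Coherent Q) {M T : List X → ℝ} (hM : IsSupermart Q M)
    (hT : IsSupermart Q T) {ε : ℝ} (hε : 0 ≤ ε) :
    IsSupermart Q (fun s => M s + ε * T s) := by
  intro s
  rw [pdiff_add_mul]
  calc Q s (pdiff M s + ε • pdiff T s)
      ≤ Q s (pdiff M s) + Q s (ε • pdiff T s) := (hQ s).2.1 _ _
    _ = Q s (pdiff M s) + ε * Q s (pdiff T s) := by rw [(hQ s).2.2 _ ε hε]
    _ ≤ 0 := add_nonpos (hM s) (mul_nonpos_of_nonneg_of_nonpos hε (hT s))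

lemma isTestSupermart_one (hQ : Coherent Q) : IsTestSupermart Q (fun _ => 1) := by
  refine ⟨fun s => ?_, fun _ => zero_le_one, rfl⟩
  -- `Q s 0 = 0` is homogeneity at `c = 0`.
  have hzero : pdiff (fun _ : List X => (1 : ℝ)) s = (0 : ℝ) • pdiff (fun _ => 1) s := by
    funext x; simp [pdiff]
  rw [hzero, (hQ s).2.2 _ 0 le_rfl, zero_mul]

end Supermartingales

lemma le_liminf_add_mul {M T : ℕ → ℝ} {a : EReal} {C ε : ℝ} (hM : ∀ n, C ≤ M n)
    (hT : ∀ n, 0 ≤ T n) (hε : 0 < ε)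
    (hdiv : liminf (fun n => (M n : EReal)) atTop < a → Tendsto T atTop atTop) :
    a ≤ liminf (fun n => ((M n + ε * T n : ℝ) : EReal)) atTop := by
  by_cases hlt : liminf (fun n => (M n : EReal)) atTop < a
  · have hsum : Tendsto (fun n => M n + ε * T n) atTop atTop :=
      tendsto_atTop_mono (fun n => add_le_add_left (hM n) _)
        (tendsto_atTop_add_const_left _ C ((hdiv hlt).const_mul_atTop hε))
    rw [(EReal.tendsto_coe_nhds_top_iff.2 hsum).liminf_eq]
    exact le_top
  · refine (not_lt.1 hlt).trans (liminf_le_liminf (Eventually.of_forall fun n => ?_))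
    exact EReal.coe_le_coe_iff.2 (le_add_of_nonneg_right (mul_nonneg hε.le (hT n)))

theorem EV_eq_sas_inf_general {X : Type*}
    (Q : List X → (X → ℝ) → ℝ) (hQ : Coherent Q)
    (f : (ℕ → X) → EReal) :
    EV Q f [] = sInf { y : EReal | ∃ M : List X → ℝ, IsSupermart Q M ∧ BddBelowProc M ∧
      (∃ T : List X → ℝ, IsTestSupermart Q T ∧
        ∀ ω : ℕ → X,
          Filter.liminf (fun n => ((M (pref ω n) : ℝ) : EReal)) Filter.atTop < f ω →
          Filter.Tendsto (fun n => T (pref ω n)) Filter.atTop Filter.atTop) ∧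
      y = ((M [] : ℝ) : EReal) } := by
  refine le_antisymm (le_sInf ?_) (sInf_le_sInf ?_)
  · rintro y ⟨M, hM, ⟨C, hC⟩, ⟨T, ⟨hTs, hT0, hT1⟩, hdiv⟩, rfl⟩
    refine EReal.le_of_forall_lt_iff_le.1 fun z hz => sInf_le ?_
    have hε : 0 < z - M [] := sub_pos.2 (EReal.coe_lt_coe_iff.1 hz)
    refine ⟨fun s => M s + (z - M []) * T s, hM.add_mul hQ hTs hε.le,
      ⟨C, fun s => le_add_of_le_of_nonneg (hC s) (mul_nonneg hε.le (hT0 s))⟩,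
      fun ω _ => le_liminf_add_mul (fun _ => hC _) (fun _ => hT0 _) hε (hdiv ω), ?_⟩
    simp [hT1]
  · rintro y ⟨M, hM, hB, hdom, rfl⟩
    exact ⟨M, hM, hB, ⟨fun _ => 1, isTestSupermart_one hQ,
      fun ω hlt => absurd (hdom ω rfl) hlt.not_ge⟩, rfl⟩

theorem EV_eq_sas_inf {X : Type*} [Fintype X] [Nonempty X]
    (Q : List X → (X → ℝ) → ℝ) (hQ : Coherent Q)
    (f : (ℕ → X) → EReal) :
    EV Q f [] = sInf { y : EReal | ∃ M : List X → ℝ, IsSupermart Q M ∧ BddBelowProc M ∧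
      (∃ T : List X → ℝ, IsTestSupermart Q T ∧
        ∀ ω : ℕ → X,
          Filter.liminf (fun n => ((M (pref ω n) : ℝ) : EReal)) Filter.atTop < f ω →
          Filter.Tendsto (fun n => T (pref ω n)) Filter.atTop Filter.atTop) ∧
      y = ((M [] : ℝ) : EReal) } :=
  EV_eq_sas_inf_general Q hQ f
end

section
/- (Continuity with respect to lower cuts) For any extended real variable f on the path space Ω, defining f_A(ω) := max{f(ω), A} for each real A, one has lim_{A → −∞} E_V(f_A) = E_V(f). -/
/-!
Raising `f` to `max f A` only makes `E_V` larger. Conversely, a supermartingale bounded below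
by `C` has liminf at least `C` along every path, so if it dominates `f` it also dominates
`max f A` for every `A ≤ C`; hence `E_V (max f A)` drops below any value `M □` witnessing
`E_V f` once `A` is small enough.
-/

open Filter

section

variable {X : Type*} (Q : List X → (X → ℝ) → ℝ)

theorem EV_mono {f g : (ℕ → X) → EReal} (hfg : f ≤ g) (s : List X) : EV Q f s ≤ EV Q g s := by
  refine sInf_le_sInf ?_
  rintro y ⟨M, hM, hbdd, hdom, rfl⟩
  exact ⟨M, hM, hbdd, fun ω hω => (hfg ω).trans (hdom ω hω), rfl⟩

theorem EReal.coe_le_liminf_of_forall_le {ι : Type*} {l : Filter ι} {u : ι → ℝ} {C : ℝ}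
    (hC : ∀ i, C ≤ u i) : (C : EReal) ≤ liminf (fun i => (u i : EReal)) l :=
  le_liminf_of_le (by isBoundedDefault) (Eventually.of_forall fun i => EReal.coe_le_coe (hC i))

theorem EV_max_le_of_forall_le {f : (ℕ → X) → EReal} {s : List X} {M : List X → ℝ}
    (hM : IsSupermart Q M)
    (hdom : ∀ ω : ℕ → X, pref ω s.length = s →
      f ω ≤ liminf (fun n => ((M (pref ω n) : ℝ) : EReal)) atTop)
    {C A : ℝ} (hC : ∀ t, C ≤ M t) (hAC : A ≤ C) :
    EV Q (fun ω => max (f ω) (A : EReal)) s ≤ M s := by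
  refine sInf_le ⟨M, hM, ⟨C, hC⟩, fun ω hω => max_le (hdom ω hω) ?_, rfl⟩
  exact (EReal.coe_le_coe hAC).trans (EReal.coe_le_liminf_of_forall_le fun n => hC _)

theorem iInf_EV_max_eq (f : (ℕ → X) → EReal) (s : List X) :
    ⨅ A : ℝ, EV Q (fun ω => max (f ω) (A : EReal)) s = EV Q f s := by
  refine le_antisymm (le_sInf ?_) (le_iInf fun A => EV_mono Q (fun ω => le_max_left _ _) s)
  rintro y ⟨M, hM, ⟨C, hC⟩, hdom, rfl⟩
  exact iInf_le_of_le C (EV_max_le_of_forall_le Q hM hdom hC le_rfl)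

end

theorem continuity_lower_cuts_general {X : Type*}
    (Q : List X → (X → ℝ) → ℝ)
    (f : (ℕ → X) → EReal) :
    Filter.Tendsto (fun A : ℝ => EV Q (fun ω => max (f ω) (A : EReal)) [])
      Filter.atBot (nhds (EV Q f [])) := by
  have hmono : Monotone fun A : ℝ => EV Q (fun ω => max (f ω) (A : EReal)) [] :=
    fun A B hAB => EV_mono Q (fun ω => max_le_max le_rfl (EReal.coe_le_coe hAB)) []
  simpa only [iInf_EV_max_eq] using tendsto_atBot_iInf hmono

theorem continuity_lower_cuts {X : Type*} [Fintype X] [Nonempty X]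
    (Q : List X → (X → ℝ) → ℝ) (hQ : Coherent Q)
    (f : (ℕ → X) → EReal) :
    Filter.Tendsto (fun A : ℝ => EV Q (fun ω => max (f ω) (A : EReal)) [])
      Filter.atBot (nhds (EV Q f [])) :=
  continuity_lower_cuts_general Q f
end

section
/- If there exists a bounded-below supermartingale M with M(□) ≤ α and liminf M ≥ f on all paths, then there is a real A* such that E_V(max{f, A}) ≤ α for all A ≤ A*. -/
open Filter

theorem EV_le_of_liminf_ge {X : Type*} {Q : List X → (X → ℝ) → ℝ} {f : (ℕ → X) → EReal}
    {s : List X} {M : List X → ℝ} (hM : IsSupermart Q M) (hMb : BddBelowProc M)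
    (hdom : ∀ ω : ℕ → X, pref ω s.length = s →
      f ω ≤ Filter.liminf (fun n => ((M (pref ω n) : ℝ) : EReal)) Filter.atTop) :
    EV Q f s ≤ (M s : EReal) :=
  sInf_le ⟨M, hM, hMb, hdom, rfl⟩

theorem coe_le_liminf_pref_of_forall_le {X : Type*} {M : List X → ℝ} {C : ℝ} (hC : ∀ s, C ≤ M s)
    (ω : ℕ → X) :
    (C : EReal) ≤ Filter.liminf (fun n => ((M (pref ω n) : ℝ) : EReal)) Filter.atTop :=
  Filter.le_liminf_of_le (by isBoundedDefault)
    (Filter.Eventually.of_forall fun n => EReal.coe_le_coe_iff.mpr (hC (pref ω n)))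

theorem EV_lower_cut_le_general {X : Type*}
    (Q : List X → (X → ℝ) → ℝ)
    (f : (ℕ → X) → EReal) (α : ℝ)
    (M : List X → ℝ) (hM : IsSupermart Q M) (hMb : BddBelowProc M)
    (hMα : M [] ≤ α)
    (hdom : ∀ ω : ℕ → X,
      f ω ≤ Filter.liminf (fun n => ((M (pref ω n) : ℝ) : EReal)) Filter.atTop) :
    ∃ Astar : ℝ, ∀ A : ℝ, A ≤ Astar →
      EV Q (fun ω => max (f ω) (A : EReal)) [] ≤ (α : EReal) := by
  obtain ⟨C, hC⟩ := hMb
  refine ⟨C, fun A hA => ?_⟩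
  have hcut : ∀ ω : ℕ → X, pref ω ([] : List X).length = [] →
      max (f ω) (A : EReal) ≤ Filter.liminf (fun n => ((M (pref ω n) : ℝ) : EReal)) atTop :=
    fun ω _ => max_le (hdom ω)
      ((EReal.coe_le_coe_iff.mpr hA).trans (coe_le_liminf_pref_of_forall_le hC ω))
  calc EV Q (fun ω => max (f ω) (A : EReal)) [] ≤ (M [] : EReal) :=
        EV_le_of_liminf_ge hM ⟨C, hC⟩ hcut
    _ ≤ α := EReal.coe_le_coe_iff.mpr hMα

theorem EV_lower_cut_le {X : Type*} [Fintype X] [Nonempty X]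
    (Q : List X → (X → ℝ) → ℝ) (hQ : Coherent Q)
    (f : (ℕ → X) → EReal) (α : ℝ)
    (M : List X → ℝ) (hM : IsSupermart Q M) (hMb : BddBelowProc M)
    (hMα : M [] ≤ α)
    (hdom : ∀ ω : ℕ → X,
      f ω ≤ Filter.liminf (fun n => ((M (pref ω n) : ℝ) : EReal)) Filter.atTop) :
    ∃ Astar : ℝ, ∀ A : ℝ, A ≤ Astar →
      EV Q (fun ω => max (f ω) (A : EReal)) [] ≤ (α : EReal) :=
  EV_lower_cut_le_general Q f α M hM hMb hMα hdom
end
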